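/- The real span 𝓛 of the set of vector fields {E_{m,n} : m, n ≥ 0} ∪ {Θ^i_{m,n} : i ∈ {1,2}, m, n ≥ 0}, taken as a submodule of the maps ℝ⁴ → ℝ⁴, is closed under the Lie bracket: for all V, W in this span, [V, W] also lies in the span. (In other words, 𝓛 is a Lie algebra.) -/

import Mathlib

/-- Lie bracket of vector fields on ℝ⁴: [V,W](x) = DV(x)(W(x)) − DW(x)(V(x)). -/
noncomputable def bracket (V W : (Fin 4 → ℝ) → (Fin 4 → ℝ)) : (Fin 4 → ℝ) → (Fin 4 → ℝ) :=
  fun x => fderiv ℝ V x (W x) - fderiv ℝ W x (V x)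

/-- The Eulerian vector field E₀₀(x) = x. -/
def E00 : (Fin 4 → ℝ) → (Fin 4 → ℝ) := fun x => x

/-- The rotational vector fields Θ¹₀₀(x) = (−y₁, x₁, 0, 0) and Θ²₀₀(x) = (0, 0, −y₂, x₂). -/
def Theta0 (i : Fin 2) : (Fin 4 → ℝ) → (Fin 4 → ℝ) :=
  if i = 0 then (fun x => ![-(x 1), x 0, 0, 0]) else (fun x => ![0, 0, -(x 3), x 2])

/-- Z_{m,n}(x) = (x₁² + y₁²)^m (x₂² + y₂²)^n. -/
def Z (m n : ℕ) : (Fin 4 → ℝ) → ℝ :=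
  fun x => ((x 0) ^ 2 + (x 1) ^ 2) ^ m * ((x 2) ^ 2 + (x 3) ^ 2) ^ n

/-- E_{m,n} = Z_{m,n} · E₀₀. -/
def Emn (m n : ℕ) : (Fin 4 → ℝ) → (Fin 4 → ℝ) := fun x => Z m n x • E00 x

/-- Θ^i_{m,n} = Z_{m,n} · Θ^i₀₀. -/
def Thmn (i : Fin 2) (m n : ℕ) : (Fin 4 → ℝ) → (Fin 4 → ℝ) := fun x => Z m n x • Theta0 i x

/-- The generators of 𝓛: all E_{m,n} and all Θ^i_{m,n}. -/
def lieGens : Set ((Fin 4 → ℝ) → (Fin 4 → ℝ)) :=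
  {V | ∃ m n : ℕ, V = Emn m n} ∪ {V | ∃ (i : Fin 2) (m n : ℕ), V = Thmn i m n}

/-!
Every generator is `Z_{m,n} • L` with `L` one of the commuting linear fields `E₀₀, Θ¹₀₀, Θ²₀₀`.
Along `L x`, both `x₁² + y₁²` and `x₂² + y₂²` are eigenfunctions of the derivative at `x` with a
common eigenvalue (`2` for `E₀₀` by Euler's identity, `0` for the rotations `Θⁱ₀₀`), hence so is
every `Z_{m,n}`. As `L` and `M` commute,
`[Z_{a,b} L, Z_{c,d} M] = Z_{c,d} (∂_M Z_{a,b}) L - Z_{a,b} (∂_L Z_{c,d}) M`,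
a combination of `Z_{a+c,b+d} L` and `Z_{a+c,b+d} M`. Bilinearity of the bracket on
differentiable fields extends this to the span.
-/

open ContinuousLinearMap

section EigenDerivative

variable {E : Type*} [NormedAddCommGroup E] [NormedSpace ℝ E] {f g : E → ℝ} {x v : E} {a b : ℝ}

theorem fderiv_pow_apply_of_fderiv_apply_eq_mul (hf : DifferentiableAt ℝ f x)
    (h : fderiv ℝ f x v = a * f x) (n : ℕ) :
    fderiv ℝ (fun y => f y ^ n) x v = (n * a) * f x ^ n := by
  rw [fderiv_fun_pow n hf, smul_apply, h, nsmul_eq_mul, smul_eq_mul]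
  rcases n with _ | n
  · simp
  · push_cast
    ring

theorem fderiv_mul_apply_of_fderiv_apply_eq_mul (hf : DifferentiableAt ℝ f x)
    (hg : DifferentiableAt ℝ g x) (hfv : fderiv ℝ f x v = a * f x)
    (hgv : fderiv ℝ g x v = b * g x) :
    fderiv ℝ (fun y => f y * g y) x v = (a + b) * (f x * g x) := by
  rw [fderiv_fun_mul hf hg, add_apply, smul_apply, smul_apply, hfv, hgv, smul_eq_mul,
    smul_eq_mul]
  ring

end EigenDerivative

section VectorFields

local notation "ℝ⁴" => Fin 4 → ℝ

theorem bracket_swap (V W : ℝ⁴ → ℝ⁴) : bracket W V = -bracket V W := by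
  funext x
  simp only [bracket, Pi.neg_apply, neg_sub]

theorem bracket_zero_left (W : ℝ⁴ → ℝ⁴) : bracket 0 W = 0 := by
  funext x
  simp [bracket, show (0 : ℝ⁴ → ℝ⁴) = fun _ => 0 from rfl]

theorem bracket_add_left {V₁ V₂ : ℝ⁴ → ℝ⁴} (h₁ : Differentiable ℝ V₁)
    (h₂ : Differentiable ℝ V₂) (W : ℝ⁴ → ℝ⁴) :
    bracket (V₁ + V₂) W = bracket V₁ W + bracket V₂ W := by
  funext x
  simp only [bracket, Pi.add_apply, fderiv_add (h₁ x) (h₂ x), add_apply, map_add]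
  abel

theorem bracket_smul_left {V : ℝ⁴ → ℝ⁴} (hV : Differentiable ℝ V) (c : ℝ) (W : ℝ⁴ → ℝ⁴) :
    bracket (c • V) W = c • bracket V W := by
  funext x
  simp only [bracket, Pi.smul_apply, fderiv_const_smul (hV x) c, smul_apply, map_smul,
    smul_sub]

theorem bracket_zero_right (V : ℝ⁴ → ℝ⁴) : bracket V 0 = 0 := by
  rw [bracket_swap, bracket_zero_left, neg_zero]

theorem bracket_add_right {W₁ W₂ : ℝ⁴ → ℝ⁴} (h₁ : Differentiable ℝ W₁)
    (h₂ : Differentiable ℝ W₂) (V : ℝ⁴ → ℝ⁴) :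
    bracket V (W₁ + W₂) = bracket V W₁ + bracket V W₂ := by
  rw [bracket_swap, bracket_add_left h₁ h₂, neg_add, ← bracket_swap, ← bracket_swap]

theorem bracket_smul_right {W : ℝ⁴ → ℝ⁴} (hW : Differentiable ℝ W) (c : ℝ) (V : ℝ⁴ → ℝ⁴) :
    bracket V (c • W) = c • bracket V W := by
  rw [bracket_swap, bracket_smul_left hW, ← smul_neg, ← bracket_swap]

theorem bracket_smul_clm {f g : ℝ⁴ → ℝ} (hf : Differentiable ℝ f) (hg : Differentiable ℝ g)
    (L M : ℝ⁴ →L[ℝ] ℝ⁴) :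
    bracket (fun x => f x • L x) (fun x => g x • M x) = fun x =>
      (f x * g x) • (L (M x) - M (L x)) + (g x * fderiv ℝ f x (M x)) • L x
        - (f x * fderiv ℝ g x (L x)) • M x := by
  funext x
  simp only [bracket, fderiv_fun_smul (hf x) L.differentiableAt,
    fderiv_fun_smul (hg x) M.differentiableAt, L.fderiv, M.fderiv, add_apply, smul_apply,
    smulRight_apply, map_smul]
  module

def normSqFst (x : ℝ⁴) : ℝ := x 0 ^ 2 + x 1 ^ 2

def normSqSnd (x : ℝ⁴) : ℝ := x 2 ^ 2 + x 3 ^ 2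

theorem Z_eq (m n : ℕ) : Z m n = fun x => normSqFst x ^ m * normSqSnd x ^ n := rfl

theorem Z_mul_Z (a b c d : ℕ) (x : ℝ⁴) : Z a b x * Z c d x = Z (a + c) (b + d) x := by
  simp only [Z, pow_add]
  ring

theorem differentiable_Z (m n : ℕ) : Differentiable ℝ (Z m n) := by
  unfold Z
  fun_prop

theorem fderiv_normSqFst_apply (x v : ℝ⁴) :
    fderiv ℝ normSqFst x v = 2 * (x 0 * v 0 + x 1 * v 1) := by
  have h : HasFDerivAt normSqFst _ x :=
    ((hasFDerivAt_apply (𝕜 := ℝ) 0 x).pow 2).fun_add ((hasFDerivAt_apply 1 x).pow 2)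
  rw [h.fderiv]
  simp only [Nat.add_one_sub_one, pow_one, nsmul_eq_mul, Nat.cast_ofNat, add_apply, smul_apply,
    proj_apply, smul_eq_mul]
  ring

theorem fderiv_normSqSnd_apply (x v : ℝ⁴) :
    fderiv ℝ normSqSnd x v = 2 * (x 2 * v 2 + x 3 * v 3) := by
  have h : HasFDerivAt normSqSnd _ x :=
    ((hasFDerivAt_apply (𝕜 := ℝ) 2 x).pow 2).fun_add ((hasFDerivAt_apply 3 x).pow 2)
  rw [h.fderiv]
  simp only [Nat.add_one_sub_one, pow_one, nsmul_eq_mul, Nat.cast_ofNat, add_apply, smul_apply,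
    proj_apply, smul_eq_mul]
  ring

theorem fderiv_Z_apply_of_fderiv_apply_eq_mul {x v : ℝ⁴} {a : ℝ}
    (h₁ : fderiv ℝ normSqFst x v = a * normSqFst x)
    (h₂ : fderiv ℝ normSqSnd x v = a * normSqSnd x) (m n : ℕ) :
    fderiv ℝ (Z m n) x v = ((m + n) * a) * Z m n x := by
  have hd₁ : Differentiable ℝ normSqFst := by unfold normSqFst; fun_prop
  have hd₂ : Differentiable ℝ normSqSnd := by unfold normSqSnd; fun_prop
  rw [Z_eq, fderiv_mul_apply_of_fderiv_apply_eq_mul (by fun_prop) (by fun_prop)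
    (fderiv_pow_apply_of_fderiv_apply_eq_mul (hd₁ x) h₁ m)
    (fderiv_pow_apply_of_fderiv_apply_eq_mul (hd₂ x) h₂ n)]
  ring

noncomputable def theta (i : Fin 2) : ℝ⁴ →L[ℝ] ℝ⁴ :=
  LinearMap.toContinuousLinearMap
    { toFun := Theta0 i
      map_add' := fun x y => by
        fin_cases i <;> ext k <;> fin_cases k <;> simp [Theta0] <;> ring
      map_smul' := fun c x => by
        fin_cases i <;> ext k <;> fin_cases k <;> simp [Theta0] }

theorem coe_theta (i : Fin 2) : ⇑(theta i) = Theta0 i := rfl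

def linearGens : Set (ℝ⁴ →L[ℝ] ℝ⁴) := insert (ContinuousLinearMap.id ℝ ℝ⁴) (Set.range theta)

theorem apply_apply_comm_of_mem_linearGens {L M : ℝ⁴ →L[ℝ] ℝ⁴} (hL : L ∈ linearGens)
    (hM : M ∈ linearGens) (x : ℝ⁴) : L (M x) = M (L x) := by
  rcases hL with rfl | ⟨i, rfl⟩ <;> rcases hM with rfl | ⟨j, rfl⟩
  · rfl
  · rfl
  · rfl
  · fin_cases i <;> fin_cases j <;> ext k <;> fin_cases k <;> simp [coe_theta, Theta0]

theorem exists_fderiv_normSq_apply_eq_mul {L : ℝ⁴ →L[ℝ] ℝ⁴} (hL : L ∈ linearGens) :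
    ∃ a : ℝ, ∀ x, fderiv ℝ normSqFst x (L x) = a * normSqFst x ∧
      fderiv ℝ normSqSnd x (L x) = a * normSqSnd x := by
  rcases hL with rfl | ⟨i, rfl⟩
  · refine ⟨2, fun x => ⟨?_, ?_⟩⟩ <;>
      simp only [fderiv_normSqFst_apply, fderiv_normSqSnd_apply, normSqFst, normSqSnd,
        id_apply] <;> ring
  · refine ⟨0, fun x => ⟨?_, ?_⟩⟩ <;> fin_cases i <;>
      simp [fderiv_normSqFst_apply, fderiv_normSqSnd_apply, coe_theta, Theta0] <;> ring

def zField (m n : ℕ) (L : ℝ⁴ →L[ℝ] ℝ⁴) : ℝ⁴ → ℝ⁴ := fun x => Z m n x • L x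

theorem mem_lieGens_iff {V : ℝ⁴ → ℝ⁴} :
    V ∈ lieGens ↔ ∃ m n, ∃ L ∈ linearGens, V = zField m n L := by
  constructor
  · rintro (⟨m, n, rfl⟩ | ⟨i, m, n, rfl⟩)
    · exact ⟨m, n, _, Set.mem_insert _ _, rfl⟩
    · exact ⟨m, n, _, Set.mem_insert_of_mem _ ⟨i, rfl⟩, rfl⟩
  · rintro ⟨m, n, L, rfl | ⟨i, rfl⟩, rfl⟩
    · exact Or.inl ⟨m, n, rfl⟩
    · exact Or.inr ⟨i, m, n, rfl⟩

theorem differentiable_zField (m n : ℕ) (L : ℝ⁴ →L[ℝ] ℝ⁴) : Differentiable ℝ (zField m n L) :=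
  (differentiable_Z m n).smul L.differentiable

theorem differentiable_of_mem_span_lieGens {V : ℝ⁴ → ℝ⁴} (hV : V ∈ Submodule.span ℝ lieGens) :
    Differentiable ℝ V := by
  induction hV using Submodule.span_induction with
  | mem V hV =>
    obtain ⟨m, n, L, -, rfl⟩ := mem_lieGens_iff.1 hV
    exact differentiable_zField m n L
  | zero => exact differentiable_const 0
  | add V W _ _ hV hW => exact hV.add hW
  | smul c V _ hV => exact hV.const_smul c

theorem bracket_mem_span_of_mem_lieGens {V W : ℝ⁴ → ℝ⁴} (hV : V ∈ lieGens) (hW : W ∈ lieGens) :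
    bracket V W ∈ Submodule.span ℝ lieGens := by
  obtain ⟨a, b, L, hL, rfl⟩ := mem_lieGens_iff.1 hV
  obtain ⟨c, d, M, hM, rfl⟩ := mem_lieGens_iff.1 hW
  obtain ⟨wL, hwL⟩ := exists_fderiv_normSq_apply_eq_mul hL
  obtain ⟨wM, hwM⟩ := exists_fderiv_normSq_apply_eq_mul hM
  have key : bracket (zField a b L) (zField c d M) =
      ((a + b) * wM) • zField (a + c) (b + d) L - ((c + d) * wL) • zField (a + c) (b + d) M := by
    unfold zField
    rw [bracket_smul_clm (differentiable_Z a b) (differentiable_Z c d)]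
    funext x
    simp only [apply_apply_comm_of_mem_linearGens hL hM, sub_self, smul_zero, zero_add,
      fderiv_Z_apply_of_fderiv_apply_eq_mul (hwL x).1 (hwL x).2,
      fderiv_Z_apply_of_fderiv_apply_eq_mul (hwM x).1 (hwM x).2, Pi.sub_apply,
      Pi.smul_apply, smul_smul, ← Z_mul_Z a b c d x]
    module
  have mem : ∀ N ∈ linearGens, zField (a + c) (b + d) N ∈ Submodule.span ℝ lieGens :=
    fun N hN => Submodule.subset_span (mem_lieGens_iff.2 ⟨_, _, N, hN, rfl⟩)
  rw [key]
  exact sub_mem (Submodule.smul_mem _ _ (mem L hL)) (Submodule.smul_mem _ _ (mem M hM))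

end VectorFields

/-- the span 𝓛 of the E_{m,n} and Θ^i_{m,n} is closed under the Lie bracket. -/
theorem span_closed_under_bracket (V W : (Fin 4 → ℝ) → (Fin 4 → ℝ))
    (hV : V ∈ Submodule.span ℝ lieGens) (hW : W ∈ Submodule.span ℝ lieGens) :
    bracket V W ∈ Submodule.span ℝ lieGens := by
  induction hV, hW using Submodule.span_induction₂ with
  | mem_mem V W hV hW => exact bracket_mem_span_of_mem_lieGens hV hW
  | zero_left W _ => simpa only [bracket_zero_left] using zero_mem _
  | zero_right V _ => simpa only [bracket_zero_right] using zero_mem _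
  | add_left V₁ V₂ W hV₁ hV₂ _ h₁ h₂ =>
    rw [bracket_add_left (differentiable_of_mem_span_lieGens hV₁)
      (differentiable_of_mem_span_lieGens hV₂)]
    exact add_mem h₁ h₂
  | add_right V W₁ W₂ _ hW₁ hW₂ h₁ h₂ =>
    rw [bracket_add_right (differentiable_of_mem_span_lieGens hW₁)
      (differentiable_of_mem_span_lieGens hW₂)]
    exact add_mem h₁ h₂
  | smul_left c V W hV _ h =>
    rw [bracket_smul_left (differentiable_of_mem_span_lieGens hV)]
    exact Submodule.smul_mem _ c h
  | smul_right c V W _ hW h =>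
    rw [bracket_smul_right (differentiable_of_mem_span_lieGens hW)]
    exact Submodule.smul_mem _ c h
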